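/- Under the instrumental-variable moment condition, E[(Y − q0(X) − θ0(X)·(T − p0(X)))·(Z − r0(X)) | X] = 0 almost surely; equivalently, E[(Y − q0(X))·(Z − r0(X)) | X] = θ0(X)·β0(X) almost surely. -/

import Mathlib

/-!
Write `W = Y - θ0(X) T - f0(X)` and `R = Z - r0(X)`, so that
`Y - q0(X) - θ0(X) (T - p0(X)) = W + g(X)` with `g = f0 + θ0 p0 - q0`.
Since `R` is `σ(Z, X)`-measurable, the tower property and pulling out `R` give
`E[W R | X] = E[R E[W | Z, X] | X] = 0`, while `E[g(X) R | X] = g(X) E[R | X] = 0`.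
The second identity follows by adding back `θ0(X) (T - p0(X)) R` and pulling out `θ0(X)`.
-/

open MeasureTheory

section CondExp

variable {Ω : Type*} {m m' mΩ : MeasurableSpace Ω} {μ : Measure Ω}

theorem memLp_top_of_abs_le {f : Ω → ℝ} (hf : Measurable f) (hbdd : ∃ C, ∀ ω, |f ω| ≤ C) :
    MemLp f ⊤ μ := by
  obtain ⟨C, hC⟩ := hbdd
  exact memLp_top_of_bound hf.aestronglyMeasurable C (.of_forall hC)

theorem condExp_sub_eq_zero_of_ae_eq_condExp (hm : m ≤ mΩ) [SigmaFinite (μ.trim hm)]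
    {Z r : Ω → ℝ} (hZ : Integrable Z μ) (hr : StronglyMeasurable[m] r) (hrZ : r =ᵐ[μ] μ[Z | m]) :
    μ[Z - r | m] =ᵐ[μ] 0 := by
  have hri : Integrable r μ := integrable_condExp.congr hrZ.symm
  refine (condExp_sub hZ hri m).trans ?_
  rw [condExp_of_stronglyMeasurable hm hr hri]
  filter_upwards [hrZ] with ω hω
  simp [hω]

theorem condExp_mul_eq_zero_of_condExp_eq_zero [IsFiniteMeasure μ] {R W : Ω → ℝ}
    (hmm' : m ≤ m') (hm' : m' ≤ mΩ) (hR : StronglyMeasurable[m'] R)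
    (hRW : Integrable (R * W) μ) (hW : Integrable W μ) (hW0 : μ[W | m'] =ᵐ[μ] 0) :
    μ[R * W | m] =ᵐ[μ] 0 := calc
  μ[R * W | m] =ᵐ[μ] μ[μ[R * W | m'] | m] := (condExp_condExp_of_le hmm' hm').symm
  _ =ᵐ[μ] μ[R * μ[W | m'] | m] :=
    condExp_congr_ae (condExp_mul_of_stronglyMeasurable_left hR hRW hW)
  _ =ᵐ[μ] μ[0 | m] := condExp_congr_ae (hW0.mono fun ω hω => by simp [hω])
  _ = 0 := condExp_zero

theorem condExp_add_mul_eq_zero [IsFiniteMeasure μ] {W g R : Ω → ℝ}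
    (hmm' : m ≤ m') (hm' : m' ≤ mΩ)
    (hW : MemLp W ⊤ μ) (hg : MemLp g ⊤ μ) (hR : MemLp R ⊤ μ)
    (hgm : StronglyMeasurable[m] g) (hRm' : StronglyMeasurable[m'] R)
    (hW0 : μ[W | m'] =ᵐ[μ] 0) (hR0 : μ[R | m] =ᵐ[μ] 0) :
    μ[(W + g) * R | m] =ᵐ[μ] 0 := by
  have hWR : μ[R * W | m] =ᵐ[μ] 0 := condExp_mul_eq_zero_of_condExp_eq_zero hmm' hm' hRm'
    ((hW.mul hR).integrable le_top) (hW.integrable le_top) hW0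
  have hgR : μ[g * R | m] =ᵐ[μ] 0 := condExp_mul_eq_zero_of_condExp_eq_zero le_rfl
    (hmm'.trans hm') hgm ((hR.mul hg).integrable le_top) (hR.integrable le_top) hR0
  rw [add_mul, mul_comm W R]
  refine (condExp_add ((hW.mul hR).integrable le_top) ((hR.mul hg).integrable le_top) m).trans ?_
  filter_upwards [hWR, hgR] with ω h₁ h₂
  simp [h₁, h₂]

theorem condExp_add_mul_mul_eq_of_condExp_mul_eq_zero [IsFiniteMeasure μ] {U θ V R : Ω → ℝ}
    (hU : MemLp U ⊤ μ) (hθ : MemLp θ ⊤ μ) (hV : MemLp V ⊤ μ) (hR : MemLp R ⊤ μ)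
    (hθm : StronglyMeasurable[m] θ) (hUR : μ[U * R | m] =ᵐ[μ] 0) :
    μ[(U + θ * V) * R | m] =ᵐ[μ] θ * μ[V * R | m] := by
  have hVR : MemLp (V * R) ⊤ μ := hR.mul hV
  rw [add_mul, mul_assoc]
  refine (condExp_add ((hR.mul hU).integrable le_top)
    ((hVR.mul hθ).integrable le_top) m).trans ?_
  filter_upwards [hUR, condExp_mul_of_stronglyMeasurable_left hθm
    ((hVR.mul hθ).integrable le_top) (hVR.integrable le_top)] with ω h₁ h₂
  simp [h₁, h₂]

end CondExp

theorem stmt_8_general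
    {Ω 𝓧 : Type*} [MeasurableSpace Ω] [MeasurableSpace 𝓧]
    (μ : Measure Ω) [IsProbabilityMeasure μ]
    (Y T Z : Ω → ℝ) (X : Ω → 𝓧)
    (hY : Measurable Y) (hT : Measurable T) (hZ : Measurable Z) (hX : Measurable X)
    (hYbdd : ∃ C, ∀ ω, |Y ω| ≤ C) (hTbdd : ∃ C, ∀ ω, |T ω| ≤ C)
    (hZbdd : ∃ C, ∀ ω, |Z ω| ≤ C)
    (θ0 f0 : 𝓧 → ℝ) (hθ0m : Measurable θ0) (hf0m : Measurable f0)
    (hθ0bdd : ∃ C, ∀ x, |θ0 x| ≤ C) (hf0bdd : ∃ C, ∀ x, |f0 x| ≤ C)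
    (hIV : μ[fun ω => Y ω - θ0 (X ω) * T ω - f0 (X ω) |
        MeasurableSpace.comap (fun ω => (Z ω, X ω)) inferInstance] =ᵐ[μ] 0)
    (q0 p0 r0 : 𝓧 → ℝ) (hq0m : Measurable q0) (hp0m : Measurable p0) (hr0m : Measurable r0)
    (hq0bdd : ∃ C, ∀ x, |q0 x| ≤ C) (hp0bdd : ∃ C, ∀ x, |p0 x| ≤ C)
    (hr0bdd : ∃ C, ∀ x, |r0 x| ≤ C)
    (hr0 : (fun ω => r0 (X ω)) =ᵐ[μ] μ[Z | MeasurableSpace.comap X inferInstance])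
    (β0 : 𝓧 → ℝ)
    (hβ0 : (fun ω => β0 (X ω)) =ᵐ[μ]
        μ[fun ω => (T ω - p0 (X ω)) * (Z ω - r0 (X ω)) | MeasurableSpace.comap X inferInstance]) :
    (μ[fun ω => (Y ω - q0 (X ω) - θ0 (X ω) * (T ω - p0 (X ω))) * (Z ω - r0 (X ω)) |
        MeasurableSpace.comap X inferInstance] =ᵐ[μ] 0)
    ∧ μ[fun ω => (Y ω - q0 (X ω)) * (Z ω - r0 (X ω)) | MeasurableSpace.comap X inferInstance]
        =ᵐ[μ] (fun ω => θ0 (X ω) * β0 (X ω)) := by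
  have hXZX : MeasurableSpace.comap X inferInstance
      ≤ MeasurableSpace.comap (fun ω => (Z ω, X ω)) inferInstance :=
    MeasurableSpace.comap_le_comap_of_eq_comp Prod.snd measurable_snd rfl
  have bdd_comp {φ : 𝓧 → ℝ} (hφ : ∃ C, ∀ x, |φ x| ≤ C) : ∃ C, ∀ ω, |φ (X ω)| ≤ C :=
    hφ.imp fun _ hC ω => hC (X ω)
  have hY' := memLp_top_of_abs_le (μ := μ) hY hYbdd
  have hT' := memLp_top_of_abs_le (μ := μ) hT hTbdd
  have hZ' := memLp_top_of_abs_le (μ := μ) hZ hZbdd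
  have hθ' := memLp_top_of_abs_le (μ := μ) (hθ0m.comp hX) (bdd_comp hθ0bdd)
  have hf' := memLp_top_of_abs_le (μ := μ) (hf0m.comp hX) (bdd_comp hf0bdd)
  have hq' := memLp_top_of_abs_le (μ := μ) (hq0m.comp hX) (bdd_comp hq0bdd)
  have hp' := memLp_top_of_abs_le (μ := μ) (hp0m.comp hX) (bdd_comp hp0bdd)
  have hr' := memLp_top_of_abs_le (μ := μ) (hr0m.comp hX) (bdd_comp hr0bdd)
  have hR0 := condExp_sub_eq_zero_of_ae_eq_condExp hX.comap_le (hZ'.integrable le_top)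
    (hr0m.comp (comap_measurable X)).stronglyMeasurable hr0
  have part1 : μ[fun ω => (Y ω - q0 (X ω) - θ0 (X ω) * (T ω - p0 (X ω))) * (Z ω - r0 (X ω)) |
      MeasurableSpace.comap X inferInstance] =ᵐ[μ] 0 := by
    convert condExp_add_mul_eq_zero hXZX (hZ.prodMk hX).comap_le
      ((hY'.sub (hT'.mul hθ')).sub hf') ((hf'.add (hp'.mul hθ')).sub hq') (hZ'.sub hr')
      (((hf0m.add (hθ0m.mul hp0m)).sub hq0m).comp (comap_measurable X)).stronglyMeasurable
      ((measurable_fst.sub (hr0m.comp measurable_snd)).comp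
        (comap_measurable fun ω => (Z ω, X ω))).stronglyMeasurable hIV hR0 using 2
    funext ω
    simp only [Pi.add_apply, Pi.sub_apply, Pi.mul_apply, Function.comp_apply]
    ring
  refine ⟨part1, ?_⟩
  convert (condExp_add_mul_mul_eq_of_condExp_mul_eq_zero
    ((hY'.sub hq').sub ((hT'.sub hp').mul hθ')) hθ' (hT'.sub hp') (hZ'.sub hr')
    (hθ0m.comp (comap_measurable X)).stronglyMeasurable part1).trans
    ((Filter.EventuallyEq.refl _ _).mul hβ0.symm) using 2
  · funext ω
    simp only [Pi.add_apply, Pi.sub_apply, Pi.mul_apply, Function.comp_apply]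
    ring
  · rfl

theorem stmt_8
    {Ω 𝓧 : Type*} [MeasurableSpace Ω] [MeasurableSpace 𝓧] [StandardBorelSpace 𝓧]
    (μ : Measure Ω) [IsProbabilityMeasure μ]
    (Y T Z : Ω → ℝ) (X : Ω → 𝓧)
    (hY : Measurable Y) (hT : Measurable T) (hZ : Measurable Z) (hX : Measurable X)
    (hYbdd : ∃ C, ∀ ω, |Y ω| ≤ C) (hTbdd : ∃ C, ∀ ω, |T ω| ≤ C)
    (hZbdd : ∃ C, ∀ ω, |Z ω| ≤ C)
    (θ0 f0 : 𝓧 → ℝ) (hθ0m : Measurable θ0) (hf0m : Measurable f0)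
    (hθ0bdd : ∃ C, ∀ x, |θ0 x| ≤ C) (hf0bdd : ∃ C, ∀ x, |f0 x| ≤ C)
    (hIV : μ[fun ω => Y ω - θ0 (X ω) * T ω - f0 (X ω) |
        MeasurableSpace.comap (fun ω => (Z ω, X ω)) inferInstance] =ᵐ[μ] 0)
    (q0 p0 r0 : 𝓧 → ℝ) (hq0m : Measurable q0) (hp0m : Measurable p0) (hr0m : Measurable r0)
    (hq0bdd : ∃ C, ∀ x, |q0 x| ≤ C) (hp0bdd : ∃ C, ∀ x, |p0 x| ≤ C)
    (hr0bdd : ∃ C, ∀ x, |r0 x| ≤ C)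
    (hq0 : (fun ω => q0 (X ω)) =ᵐ[μ] μ[Y | MeasurableSpace.comap X inferInstance])
    (hp0 : (fun ω => p0 (X ω)) =ᵐ[μ] μ[T | MeasurableSpace.comap X inferInstance])
    (hr0 : (fun ω => r0 (X ω)) =ᵐ[μ] μ[Z | MeasurableSpace.comap X inferInstance])
    (h0 : ℝ × 𝓧 → ℝ) (hh0m : Measurable h0) (hh0bdd : ∃ C, ∀ zx, |h0 zx| ≤ C)
    (hh0 : (fun ω => h0 (Z ω, X ω)) =ᵐ[μ]
        μ[T | MeasurableSpace.comap (fun ω => (Z ω, X ω)) inferInstance])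
    (β0 : 𝓧 → ℝ) (hβ0m : Measurable β0) (hβ0bdd : ∃ C, ∀ x, |β0 x| ≤ C)
    (hβ0 : (fun ω => β0 (X ω)) =ᵐ[μ]
        μ[fun ω => (T ω - p0 (X ω)) * (Z ω - r0 (X ω)) | MeasurableSpace.comap X inferInstance])
    (V0 : 𝓧 → ℝ) (hV0m : Measurable V0) (hV0bdd : ∃ C, ∀ x, |V0 x| ≤ C)
    (hV0 : (fun ω => V0 (X ω)) =ᵐ[μ]
        μ[fun ω => (h0 (Z ω, X ω) - p0 (X ω)) ^ 2 | MeasurableSpace.comap X inferInstance]) :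
    (μ[fun ω => (Y ω - q0 (X ω) - θ0 (X ω) * (T ω - p0 (X ω))) * (Z ω - r0 (X ω)) |
        MeasurableSpace.comap X inferInstance] =ᵐ[μ] 0)
    ∧ μ[fun ω => (Y ω - q0 (X ω)) * (Z ω - r0 (X ω)) | MeasurableSpace.comap X inferInstance]
        =ᵐ[μ] (fun ω => θ0 (X ω) * β0 (X ω)) :=
  stmt_8_general μ Y T Z X hY hT hZ hX hYbdd hTbdd hZbdd θ0 f0 hθ0m hf0m hθ0bdd hf0bdd hIV q0 p0 r0
    hq0m hp0m hr0m hq0bdd hp0bdd hr0bdd hr0 β0 hβ0
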